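/- Let G be a connected graph with at least two vertices, let t ≥ 1 be an integer, and let P_t be the path with vertices u₁, …, u_t (u_i adjacent to u_{i+1}). Let B be a local metric basis of P_t ⊠ G with |B| = b, and let i₁ ≤ i₂ ≤ ⋯ ≤ i_b be the indices (listed with multiplicity) of the first components of the elements of B. Then for every l ∈ {1, …, b−2} one has i_{l+2} ≤ 2D(G) + i_l, and moreover i₃ ≤ 2D(G) + 1, where D(G) is the diameter of G. -/

import Mathlib

open SimpleGraph

/-- The strong product of two simple graphs. -/
def strongProd {α β : Type*} (G : SimpleGraph α) (H : SimpleGraph β) :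
    SimpleGraph (α × β) where
  Adj x y := (x.1 = y.1 ∧ H.Adj x.2 y.2) ∨ (x.2 = y.2 ∧ G.Adj x.1 y.1) ∨
      (G.Adj x.1 y.1 ∧ H.Adj x.2 y.2)
  symm := by
    constructor
    rintro x y (⟨h1, h2⟩ | ⟨h1, h2⟩ | ⟨h1, h2⟩)
    · exact Or.inl ⟨h1.symm, h2.symm⟩
    · exact Or.inr (Or.inl ⟨h1.symm, h2.symm⟩)
    · exact Or.inr (Or.inr ⟨h1.symm, h2.symm⟩)
  loopless := by
    constructor
    rintro x (⟨_, h⟩ | ⟨_, h⟩ | ⟨h, _⟩)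
    · exact H.irrefl h
    · exact G.irrefl h
    · exact G.irrefl h

/-- A set `S` is a local metric generator for `G` if every pair of adjacent
vertices is distinguished by some element of `S`. -/
def IsLocalMetricGenerator {α : Type*} (G : SimpleGraph α) (S : Set α) : Prop :=
  ∀ u v : α, G.Adj u v → ∃ s ∈ S, G.dist u s ≠ G.dist v s

/-- The local metric dimension of a graph. -/
noncomputable def localMetricDim {α : Type*} [Fintype α] (G : SimpleGraph α) : ℕ :=
  sInf {n | ∃ S : Finset α, S.card = n ∧ IsLocalMetricGenerator G ↑S}

/-- A set `S` is a metric generator for `G` if every pair of distinct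
vertices is distinguished by some element of `S`. -/
def IsMetricGenerator {α : Type*} (G : SimpleGraph α) (S : Set α) : Prop :=
  ∀ u v : α, u ≠ v → ∃ s ∈ S, G.dist u s ≠ G.dist v s

/-- The metric dimension of a graph. -/
noncomputable def metricDim {α : Type*} [Fintype α] (G : SimpleGraph α) : ℕ :=
  sInf {n | ∃ S : Finset α, S.card = n ∧ IsMetricGenerator G ↑S}

/-- The eccentricity of a vertex: the maximum distance to another vertex. -/
noncomputable def eccentricity {α : Type*} (G : SimpleGraph α) (v : α) : ℕ :=
  sSup {d | ∃ u, G.dist v u = d}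

/-- The diameter of a graph: maximum eccentricity. -/
noncomputable def graphDiam {α : Type*} (G : SimpleGraph α) : ℕ :=
  sSup {d | ∃ v, eccentricity G v = d}

/-- The radius of a graph: minimum eccentricity. -/
noncomputable def graphRadius {α : Type*} (G : SimpleGraph α) : ℕ :=
  sInf {d | ∃ v, eccentricity G v = d}

/-- The interval `I[x,y]`: vertices lying on some shortest `x`–`y` path. -/
def interval {α : Type*} (G : SimpleGraph α) (x y : α) : Set α :=
  {w | G.dist x w + G.dist w y = G.dist x y}

/-- A graph is adjacency `k`-resolved if for every pair of adjacent vertices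
`x, y` there is a vertex `w` with `d(y,w) ≥ k` and `x ∈ I[y,w]`, or
`d(x,w) ≥ k` and `y ∈ I[x,w]`. -/
def AdjKResolved {α : Type*} (G : SimpleGraph α) (k : ℕ) : Prop :=
  ∀ x y : α, G.Adj x y →
    ∃ w : α, (k ≤ G.dist y w ∧ x ∈ interval G y w) ∨
      (k ≤ G.dist x w ∧ y ∈ interval G x w)

/-- The true twin equivalence relation: `u ≈ v` iff `N[u] = N[v]`. -/
def trueTwinSetoid {α : Type*} (G : SimpleGraph α) : Setoid α where
  r u v := insert u (G.neighborSet u) = insert v (G.neighborSet v)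
  iseqv := ⟨fun _ => rfl, Eq.symm, Eq.trans⟩


/-!
In `P_t ⊠ G` the distance is `max (|a - c|, d_G(x, y))`, so a vertex whose row is at least `D(G)`
away from row `c` is equidistant from all vertices of row `c` and resolves no edge inside it.
Vertices `w₁, w₂` in rows `r₁, r₂ ≠ c` do not help either as long as
`d_G(w₁, w₂) < |c - r₁| + |c - r₂|`: some edge of a shortest `w₁`–`w₂` path lies within
`|c - r₁|` of `w₁` and within `|c - r₂|` of `w₂`, and the two vertices of that edge in row `c` are
then at the same distance from both. If `i_{l+2} > 2D + i_l`, rows `i_l + D` and `i_l + D + 1` have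
only the basis vertex of index `l + 1` nearby; if `i₃ > 2D + 1`, rows `1, …, i₃ - D` have only the
first two. In both cases some edge is left unresolved.
-/

namespace SimpleGraph

variable {V : Type*} {G : SimpleGraph V} {u v : V}

lemma Walk.dist_getVert_le (p : G.Walk u v) (n : ℕ) : G.dist u (p.getVert n) ≤ n :=
  (dist_le (p.take n)).trans (by simp)

lemma Walk.dist_getVert_le_length_sub (p : G.Walk u v) (n : ℕ) :
    G.dist (p.getVert n) v ≤ p.length - n :=
  (dist_le (p.drop n)).trans (by simp)

lemma Walk.natDist_le_length {f : V → ℕ} (hf : ∀ x y, G.Adj x y → Nat.dist (f x) (f y) ≤ 1)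
    (p : G.Walk u v) : Nat.dist (f u) (f v) ≤ p.length := by
  induction p with
  | nil => simp
  | @cons a b c h _ ih =>
    have := Nat.dist.triangle_inequality (f a) (f b) (f c)
    grind [Walk.length_cons, hf _ _ h]

lemma Reachable.natDist_le_dist {f : V → ℕ} (hf : ∀ x y, G.Adj x y → Nat.dist (f x) (f y) ≤ 1)
    (h : G.Reachable u v) : Nat.dist (f u) (f v) ≤ G.dist u v := by
  obtain ⟨p, hp⟩ := h.exists_walk_length_eq_dist
  exact hp ▸ p.natDist_le_length hf

lemma natDist_dist_le_one_of_eq_or_adj (a : V) {x y : V} (h : x = y ∨ G.Adj x y) :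
    Nat.dist (G.dist a x) (G.dist a y) ≤ 1 := by
  rcases h with rfl | h
  · simp
  · rcases h.diff_dist_adj (u := a) with e | e | e <;> simp only [Nat.dist, e] <;> omega

lemma natDist_le_dist_pathGraph {n : ℕ} (a b : Fin n) :
    Nat.dist a b ≤ (pathGraph n).dist a b :=
  (pathGraph_preconnected n a b).natDist_le_dist fun x y h => by
    rcases pathGraph_adj.mp h with h | h <;> simp [Nat.dist, ← h]

lemma Preconnected.exists_adj_or_eq_dist_le (hG : G.Preconnected) (u v : V) :
    ∃ u', (u = u' ∨ G.Adj u u') ∧ G.dist u' v ≤ G.dist u v - 1 := by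
  obtain rfl | huv := eq_or_ne u v
  · exact ⟨u, Or.inl rfl, by simp⟩
  obtain ⟨p, hp⟩ := (hG u v).exists_walk_length_eq_dist
  refine ⟨p.getVert 1, Or.inr (p.adj_snd (p.not_nil_of_ne huv)), ?_⟩
  simpa [hp] using p.dist_getVert_le_length_sub 1

/-- Inside a shortest `x`–`y` path, the edge at distance `d(x,y) - k₂` from `x` is close to both
ends; if `x = y`, any edge at `x` will do. -/
lemma Preconnected.exists_adj_dist_le [Nontrivial V] (hG : G.Preconnected) (x y : V)
    {k₁ k₂ : ℕ} (hk₁ : 1 ≤ k₁) (hk₂ : 1 ≤ k₂) (h : G.dist x y < k₁ + k₂) :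
    ∃ u u', G.Adj u u' ∧ G.dist u x ≤ k₁ ∧ G.dist u' x ≤ k₁ ∧
      G.dist u y ≤ k₂ ∧ G.dist u' y ≤ k₂ := by
  obtain rfl | hxy := eq_or_ne x y
  · obtain ⟨v, hv⟩ := hG.exists_adj_of_nontrivial x
    have : G.dist v x = 1 := dist_eq_one_iff_adj.mpr hv.symm
    exact ⟨x, v, hv, by simp, by omega, by simp, by omega⟩
  obtain ⟨p, hp⟩ := (hG x y).exists_walk_length_eq_dist
  have hpos := (hG x y).pos_dist_of_ne hxy
  set a := G.dist x y - k₂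
  have h₁ := p.dist_getVert_le a
  have h₂ := p.dist_getVert_le (a + 1)
  have h₃ := p.dist_getVert_le_length_sub a
  have h₄ := p.dist_getVert_le_length_sub (a + 1)
  rw [dist_comm] at h₁ h₂
  exact ⟨p.getVert a, p.getVert (a + 1), p.adj_getVert_succ (by omega),
    by omega, by omega, by omega, by omega⟩

end SimpleGraph

lemma dist_le_graphDiam {V : Type*} [Finite V] (G : SimpleGraph V) (u v : V) :
    G.dist u v ≤ graphDiam G :=
  (le_csSup (Set.finite_range (G.dist u)).bddAbove ⟨v, rfl⟩).trans
    (le_csSup (Set.finite_range (eccentricity G)).bddAbove ⟨u, rfl⟩)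

lemma one_le_graphDiam {V : Type*} [Finite V] [Nontrivial V] {G : SimpleGraph V}
    (hG : G.Preconnected) : 1 ≤ graphDiam G := by
  obtain ⟨v, hv⟩ := hG.exists_adj_of_nontrivial (Classical.arbitrary V)
  exact (dist_eq_one_iff_adj.mpr hv).symm.le.trans (dist_le_graphDiam G _ v)

section StrongProduct

variable {α β : Type*} {G : SimpleGraph α} {H : SimpleGraph β}

lemma strongProd_adj_iff {x y : α × β} :
    (strongProd G H).Adj x y ↔
      x ≠ y ∧ (x.1 = y.1 ∨ G.Adj x.1 y.1) ∧ (x.2 = y.2 ∨ H.Adj x.2 y.2) := by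
  obtain ⟨a, b⟩ := x
  obtain ⟨c, d⟩ := y
  simp only [strongProd, ne_eq, Prod.mk.injEq]
  constructor
  · rintro (⟨rfl, h⟩ | ⟨rfl, h⟩ | ⟨h, h'⟩)
    · exact ⟨fun e => H.irrefl (e.2 ▸ h), Or.inl rfl, Or.inr h⟩
    · exact ⟨fun e => G.irrefl (e.1 ▸ h), Or.inr h, Or.inl rfl⟩
    · exact ⟨fun e => G.irrefl (e.1 ▸ h), Or.inr h, Or.inr h'⟩
  · rintro ⟨hne, rfl | h, rfl | h'⟩
    · exact absurd ⟨rfl, rfl⟩ hne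
    · exact Or.inl ⟨rfl, h'⟩
    · exact Or.inr (Or.inl ⟨rfl, h⟩)
    · exact Or.inr (Or.inr ⟨h, h'⟩)

/-- Move both coordinates one step along shortest paths at the same time. -/
lemma exists_walk_strongProd_length_le (hG : G.Preconnected) (hH : H.Preconnected) (n : ℕ)
    (x y : α × β) (h₁ : G.dist x.1 y.1 ≤ n) (h₂ : H.dist x.2 y.2 ≤ n) :
    ∃ p : (strongProd G H).Walk x y, p.length ≤ n := by
  induction n generalizing x with
  | zero =>
    obtain rfl : x = y := Prod.ext ((hG _ _).dist_eq_zero_iff.mp (by omega))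
      ((hH _ _).dist_eq_zero_iff.mp (by omega))
    exact ⟨Walk.nil, le_rfl⟩
  | succ n ih =>
    obtain rfl | hxy := eq_or_ne x y
    · exact ⟨Walk.nil, by simp⟩
    obtain ⟨a, ha, ha'⟩ := hG.exists_adj_or_eq_dist_le x.1 y.1
    obtain ⟨b, hb, hb'⟩ := hH.exists_adj_or_eq_dist_le x.2 y.2
    have hne : x ≠ (a, b) := by
      intro e
      obtain ⟨rfl, rfl⟩ : x.1 = a ∧ x.2 = b := Prod.ext_iff.mp e
      exact hxy (Prod.ext ((hG _ _).dist_eq_zero_iff.mp (by omega))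
        ((hH _ _).dist_eq_zero_iff.mp (by omega)))
    obtain ⟨p, hp⟩ := ih (a, b) (by dsimp only; omega) (by dsimp only; omega)
    exact ⟨.cons (strongProd_adj_iff.mpr ⟨hne, ha, hb⟩) p, by simp; omega⟩

theorem dist_strongProd (hG : G.Preconnected) (hH : H.Preconnected) (x y : α × β) :
    (strongProd G H).dist x y = max (G.dist x.1 y.1) (H.dist x.2 y.2) := by
  obtain ⟨p, hp⟩ := exists_walk_strongProd_length_le hG hH _ x y le_sup_left le_sup_right
  refine le_antisymm ((dist_le p).trans hp) (max_le ?_ ?_)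
  · simpa [Nat.dist] using p.reachable.natDist_le_dist (f := fun z => G.dist x.1 z.1)
      fun _ _ h => natDist_dist_le_one_of_eq_or_adj _ (strongProd_adj_iff.mp h).2.1
  · simpa [Nat.dist] using p.reachable.natDist_le_dist (f := fun z => H.dist x.2 z.2)
      fun _ _ h => natDist_dist_le_one_of_eq_or_adj _ (strongProd_adj_iff.mp h).2.2

end StrongProduct

theorem not_isLocalMetricGenerator_strongProd {α β : Type*} [Finite α] [Nontrivial α]
    {P : SimpleGraph β} {G : SimpleGraph α} (hP : P.Preconnected) (hG : G.Preconnected)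
    {S : Set (β × α)} {c : β} {w₁ w₂ : β × α}
    (hfar : ∀ s ∈ S, s = w₁ ∨ s = w₂ ∨ graphDiam G ≤ P.dist c s.1)
    (h₁ : c ≠ w₁.1) (h₂ : c ≠ w₂.1) (hsum : G.dist w₁.2 w₂.2 < P.dist c w₁.1 + P.dist c w₂.1) :
    ¬ IsLocalMetricGenerator (strongProd P G) S := by
  intro hS
  obtain ⟨u, u', hadj, hu₁, hu₁', hu₂, hu₂'⟩ := hG.exists_adj_dist_le w₁.2 w₂.2
    ((hP _ _).pos_dist_of_ne h₁) ((hP _ _).pos_dist_of_ne h₂) hsum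
  obtain ⟨s, hs, hne⟩ := hS (c, u) (c, u')
    (strongProd_adj_iff.mpr ⟨by simp [hadj.ne], Or.inl rfl, Or.inr hadj⟩)
  have hclose : G.dist u s.2 ≤ P.dist c s.1 ∧ G.dist u' s.2 ≤ P.dist c s.1 := by
    rcases hfar s hs with rfl | rfl | hD
    · exact ⟨hu₁, hu₁'⟩
    · exact ⟨hu₂, hu₂'⟩
    · exact ⟨(dist_le_graphDiam G _ _).trans hD, (dist_le_graphDiam G _ _).trans hD⟩
  rw [dist_strongProd hP hG, dist_strongProd hP hG, max_eq_left hclose.1,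
    max_eq_left hclose.2] at hne
  exact hne rfl

/-- Of the rows `0`, `1` and `m - 1`, one works. -/
lemma Nat.exists_lt_ne_ne_lt_dist_add_dist {d m : ℕ} (hd : 1 ≤ d) (hm : d + 2 ≤ m) (r₁ r₂ : ℕ) :
    ∃ c < m, c ≠ r₁ ∧ c ≠ r₂ ∧ d < Nat.dist c r₁ + Nat.dist c r₂ := by
  simp only [Nat.dist]
  by_cases h₀ : r₁ = 0 ∨ r₂ = 0 <;> by_cases h₁ : r₁ = m - 1 ∨ r₂ = m - 1
  · exact ⟨1, by omega⟩
  · exact ⟨m - 1, by omega⟩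
  · exact ⟨0, by omega⟩
  · by_cases h : d < r₁ + r₂
    · exact ⟨0, by omega⟩
    · exact ⟨m - 1, by omega⟩

section LocalMetricGeneratorOfPathProduct

variable {α : Type*} [Finite α] [Nontrivial α] {G : SimpleGraph α} {t : ℕ}
  {B : Set (Fin t × α)}

theorem le_two_mul_graphDiam_add_of_eq_of_between (hG : G.Preconnected)
    (hB : IsLocalMetricGenerator (strongProd (pathGraph t) G) B) {r r' : ℕ} (hr' : r' < t)
    {w : Fin t × α} (hw : ∀ p ∈ B, r < (p.1 : ℕ) → (p.1 : ℕ) < r' → p = w) :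
    r' ≤ 2 * graphDiam G + r := by
  by_contra! h
  have hD := one_le_graphDiam hG
  have hrow : ∀ c : Fin t, r + graphDiam G ≤ c → (c : ℕ) ≤ r + graphDiam G + 1 → c = w.1 := by
    intro c hc₁ hc₂
    by_contra hcw
    refine not_isLocalMetricGenerator_strongProd (pathGraph_preconnected t) hG (S := B)
      (fun s hs => ?_) hcw hcw ?_ hB
    · by_cases hs' : r < (s.1 : ℕ) ∧ (s.1 : ℕ) < r'
      · exact Or.inl (hw s hs hs'.1 hs'.2)
      · exact Or.inr (Or.inr (le_trans (by simp only [Nat.dist]; omega)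
        (natDist_le_dist_pathGraph _ _)))
    · have := (pathGraph_preconnected t c w.1).pos_dist_of_ne hcw
      simp only [dist_self]
      omega
  have e₁ := congrArg Fin.val (hrow ⟨r + graphDiam G, by omega⟩ le_rfl (by simp))
  have e₂ := congrArg Fin.val (hrow ⟨r + graphDiam G + 1, by omega⟩ (by simp) le_rfl)
  simp only at e₁ e₂
  omega

theorem le_two_mul_graphDiam_of_eq_or_eq_of_lt (hG : G.Preconnected)
    (hB : IsLocalMetricGenerator (strongProd (pathGraph t) G) B) {r : ℕ} (hr : r < t)
    {w₁ w₂ : Fin t × α} (hw : ∀ p ∈ B, (p.1 : ℕ) < r → p = w₁ ∨ p = w₂) :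
    r ≤ 2 * graphDiam G := by
  by_contra! h
  have hD := one_le_graphDiam hG
  obtain ⟨c, hc, hc₁, hc₂, hsum⟩ := Nat.exists_lt_ne_ne_lt_dist_add_dist hD
    (show graphDiam G + 2 ≤ r - graphDiam G + 1 by omega) w₁.1 w₂.1
  refine not_isLocalMetricGenerator_strongProd (pathGraph_preconnected t) hG (S := B)
    (c := ⟨c, by omega⟩) (fun s hs => ?_) (Fin.ne_of_val_ne hc₁) (Fin.ne_of_val_ne hc₂) ?_ hB
  · by_cases hs' : (s.1 : ℕ) < r
    · exact (hw s hs hs').elim Or.inl (Or.inr ∘ Or.inl)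
    · exact Or.inr (Or.inr (le_trans (by simp only [Nat.dist]; omega)
        (natDist_le_dist_pathGraph _ _)))
  · have := dist_le_graphDiam G w₁.2 w₂.2
    have e₁ := natDist_le_dist_pathGraph ⟨c, by omega⟩ w₁.1
    have e₂ := natDist_le_dist_pathGraph ⟨c, by omega⟩ w₂.1
    simp only at e₁ e₂
    omega

end LocalMetricGeneratorOfPathProduct

section SortedEnumeration

open Finset

variable {γ : Type*} {B : Finset γ}

lemma card_filter_eq_of_map_val_eq {κ δ : Type*} {s : Finset κ} {f : γ → δ} {i : κ → δ}
    (h : B.val.map f = s.val.map i) (Q : δ → Prop) [DecidablePred Q] :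
    #(B.filter fun p => Q (f p)) = #(s.filter fun j => Q (i j)) := by
  have := congrArg (Multiset.countP Q) h
  rwa [Multiset.countP_map, Multiset.countP_map] at this

lemma exists_subset_pair_of_card_le_two [DecidableEq γ] [Nonempty γ] (h : #B ≤ 2) :
    ∃ x y, B ⊆ {x, y} := by
  obtain rfl | ⟨x, hx⟩ := B.eq_empty_or_nonempty
  · exact ⟨Classical.arbitrary γ, Classical.arbitrary γ, empty_subset _⟩
  obtain ⟨y, hy⟩ := card_le_one_iff_subset_singleton.mp
    (show #(B.erase x) ≤ 1 by rw [card_erase_of_mem hx]; omega)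
  refine ⟨x, y, fun z hz => ?_⟩
  by_cases hzx : z = x
  · simp [hzx]
  · exact mem_insert_of_mem (hy (mem_erase.mpr ⟨hzx, hz⟩))

variable [Nonempty γ] {f : γ → ℕ} {i : ℕ → ℕ} {b : ℕ}

lemma exists_eq_of_between (henum : B.val.map f = (Multiset.range b).map i)
    (hmono : ∀ j k, j ≤ k → k < b → i j ≤ i k) {l : ℕ} (hl : l + 2 < b) :
    ∃ w, ∀ p ∈ B, i l < f p → f p < i (l + 2) → p = w := by
  classical
  have hcard : #(B.filter fun p => i l < f p ∧ f p < i (l + 2)) ≤ 1 := by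
    rw [card_filter_eq_of_map_val_eq (s := range b) henum (fun x => i l < x ∧ x < i (l + 2))]
    refine (card_le_card fun j hj => ?_).trans (card_singleton (l + 1)).le
    have := hmono j l
    have := hmono (l + 2) j
    simp only [mem_filter, mem_range, mem_singleton] at hj ⊢
    omega
  obtain ⟨w, hw⟩ := card_le_one_iff_subset_singleton.mp hcard
  exact ⟨w, fun p hp h₁ h₂ => mem_singleton.mp (hw (mem_filter.mpr ⟨hp, h₁, h₂⟩))⟩

lemma exists_eq_or_eq_of_lt_third (henum : B.val.map f = (Multiset.range b).map i)
    (hmono : ∀ j k, j ≤ k → k < b → i j ≤ i k) :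
    ∃ w₁ w₂, ∀ p ∈ B, f p < i 2 → p = w₁ ∨ p = w₂ := by
  classical
  have hcard : #(B.filter fun p => f p < i 2) ≤ 2 := by
    rw [card_filter_eq_of_map_val_eq (s := range b) henum (· < i 2)]
    refine (card_le_card fun j hj => ?_).trans (card_le_two (a := 0) (b := 1))
    have := hmono 2 j
    simp only [mem_filter, mem_range, mem_insert, mem_singleton] at hj ⊢
    omega
  obtain ⟨w₁, w₂, hw⟩ := exists_subset_pair_of_card_le_two hcard
  exact ⟨w₁, w₂, fun p hp h => by simpa using hw (mem_filter.mpr ⟨hp, h⟩)⟩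

end SortedEnumeration

theorem stmt12_general {α : Type*} [Fintype α] (G : SimpleGraph α) (hG : G.Connected)
    (hn : 2 ≤ Fintype.card α) (t : ℕ)
    (B : Finset (Fin t × α))
    (hBgen : IsLocalMetricGenerator (strongProd (SimpleGraph.pathGraph t) G) ↑B)
    (b : ℕ)
    (i : ℕ → ℕ)
    (hmono : ∀ j k : ℕ, j ≤ k → k < b → i j ≤ i k)
    (henum : Multiset.map (fun p => (p.1 : ℕ) + 1) B.val =
      Multiset.map i (Multiset.range b)) :
    (∀ l : ℕ, l + 2 < b → i (l + 2) ≤ 2 * graphDiam G + i l) ∧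
      (3 ≤ b → i 2 ≤ 2 * graphDiam G + 1) := by
  have : Nontrivial α := Fintype.one_lt_card_iff_nontrivial.mp hn
  have hrow : ∀ j < b, ∃ p ∈ B, (p.1 : ℕ) + 1 = i j := fun j hj => by
    have := Multiset.mem_map_of_mem i (Multiset.mem_range.mpr hj)
    rwa [← henum, Multiset.mem_map] at this
  refine ⟨fun l hl => ?_, fun hb => ?_⟩
  · obtain ⟨p, -, hpl⟩ := hrow l (by omega)
    obtain ⟨q, -, hql⟩ := hrow (l + 2) hl
    have : Nonempty (Fin t × α) := ⟨p⟩
    obtain ⟨w, hw⟩ := exists_eq_of_between henum hmono hl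
    have := le_two_mul_graphDiam_add_of_eq_of_between hG.preconnected hBgen q.1.isLt
      (r := p.1) fun s hs h₁ h₂ => hw s hs (by omega) (by omega)
    omega
  · obtain ⟨q, -, hq⟩ := hrow 2 hb
    have : Nonempty (Fin t × α) := ⟨q⟩
    obtain ⟨w₁, w₂, hw⟩ := exists_eq_or_eq_of_lt_third henum hmono
    have := le_two_mul_graphDiam_of_eq_or_eq_of_lt hG.preconnected hBgen q.1.isLt
      fun s hs h => hw s hs (by omega)
    omega

/-- for a local metric basis `B` of `P_t ⊠ G` whose first
components, listed (1-based) in non-decreasing order with multiplicity, are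
`i₁ ≤ i₂ ≤ ⋯ ≤ i_b` (here `i (l-1)` is `i_l`), one has
`i_{l+2} ≤ 2D(G) + i_l` for every `l ∈ {1,…,b−2}`, and `i₃ ≤ 2D(G) + 1`. -/
theorem stmt12 {α : Type*} [Fintype α] (G : SimpleGraph α) (hG : G.Connected)
    (hn : 2 ≤ Fintype.card α) (t : ℕ) (ht : 1 ≤ t)
    (B : Finset (Fin t × α))
    (hBgen : IsLocalMetricGenerator (strongProd (SimpleGraph.pathGraph t) G) ↑B)
    (hBmin : B.card = localMetricDim (strongProd (SimpleGraph.pathGraph t) G))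
    (b : ℕ) (hb : B.card = b)
    (i : ℕ → ℕ)
    (hmono : ∀ j k : ℕ, j ≤ k → k < b → i j ≤ i k)
    (henum : Multiset.map (fun p => (p.1 : ℕ) + 1) B.val =
      Multiset.map i (Multiset.range b)) :
    (∀ l : ℕ, l + 2 < b → i (l + 2) ≤ 2 * graphDiam G + i l) ∧
      (3 ≤ b → i 2 ≤ 2 * graphDiam G + 1) :=
  stmt12_general G hG hn t B hBgen b i hmono henum
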